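/- If x is a rational multiple of π, then 2cos(x) is an algebraic integer. -/
import Mathlib

open Polynomial in
lemma isIntegral_of_pow_eq_one (z : ℂ) (n : ℕ) (hn : n ≠ 0) (h : z ^ n = 1) :
    IsIntegral ℤ z := by
  refine ⟨X ^ n - C 1, Polynomial.monic_X_pow_sub_C 1 hn, ?_⟩
  simp [h]

/-- If `x` is a rational multiple of π, then `2·cos x` is an algebraic integer. -/
theorem two_cos_isIntegral_of_rat_mul_pi (x : ℝ) (hx : ∃ q : ℚ, x = (q : ℝ) * Real.pi) :
    IsIntegral ℤ ((2 : ℂ) * Complex.cos (x : ℂ)) := by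
  obtain ⟨q, rfl⟩ := hx
  have key : ∀ s : ℂ, s = (q : ℂ) * Real.pi ∨ s = -((q : ℂ) * Real.pi) →
      IsIntegral ℤ (Complex.exp (s * Complex.I)) := by
    intro s hs
    apply isIntegral_of_pow_eq_one _ (2 * q.den) (by positivity)
    rw [← Complex.exp_nat_mul]
    rcases hs with h | h <;> rw [h]
    · have : ((2 * q.den : ℕ) : ℂ) * ((q : ℂ) * Real.pi * Complex.I)
          = (q.num : ℤ) * (2 * Real.pi * Complex.I) := by
        have hd : (q.den : ℂ) * (q : ℂ) = (q.num : ℂ) := by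
          rw [Rat.cast_def]
          field_simp
        push_cast
        rw [show (2 * (q.den : ℂ)) * ((q : ℂ) * Real.pi * Complex.I)
            = ((q.den : ℂ) * (q : ℂ)) * (2 * Real.pi * Complex.I) by ring, hd]
      rw [this, Complex.exp_int_mul_two_pi_mul_I]
    · have : ((2 * q.den : ℕ) : ℂ) * (-((q : ℂ) * Real.pi) * Complex.I)
          = (-q.num : ℤ) * (2 * Real.pi * Complex.I) := by
        have hd : (q.den : ℂ) * (q : ℂ) = (q.num : ℂ) := by
          rw [Rat.cast_def]
          field_simp
        push_cast
        rw [show (2 * (q.den : ℂ)) * (-((q : ℂ) * Real.pi) * Complex.I)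
            = -(((q.den : ℂ) * (q : ℂ)) * (2 * Real.pi * Complex.I)) by ring, hd]
        ring
      rw [this, Complex.exp_int_mul_two_pi_mul_I]
  have hcos : (2 : ℂ) * Complex.cos (((q : ℝ) * Real.pi : ℝ) : ℂ)
      = Complex.exp ((((q : ℝ) * Real.pi : ℝ) : ℂ) * Complex.I)
        + Complex.exp (-(((q : ℝ) * Real.pi : ℝ) : ℂ) * Complex.I) := by
    rw [Complex.cos]
    ring
  rw [hcos]
  have hc : ((((q : ℝ) * Real.pi : ℝ)) : ℂ) = (q : ℂ) * Real.pi := by push_cast; ring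
  exact (key _ (Or.inl hc)).add (key _ (Or.inr (by rw [hc])))
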